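/- The cross-ratio datum T = ((1,2,3,4),(1,2,6,7),(1,3,7,8),(1,2,5,8),(3,4,5,6)) on 8 points has cross-ratio degree exactly 2: there exists a nonzero polynomial q ∈ ℂ[x₁,…,x₅] such that for every (a₁,…,a₅) ∈ (ℂ∖{0,1})⁵ with q(a₁,…,a₅) ≠ 0, the set of tuples (p₁,…,p₈) of pairwise distinct points of ℙ¹(ℂ) with p₁ = ∞, p₂ = 0, p₃ = 1 satisfying CR(p₁,p₂,p₃,p₄)=a₁, CR(p₁,p₂,p₆,p₇)=a₂, CR(p₁,p₃,p₇,p₈)=a₃, CR(p₁,p₂,p₅,p₈)=a₄, CR(p₃,p₄,p₅,p₆)=a₅ has exactly 2 elements. -/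

import Mathlib

open OnePoint

/-- Cross-ratio of four points of `ℙ¹(ℂ) = OnePoint ℂ`:
`CR(z₁,z₂,z₃,z₄) = ((z₃−z₁)(z₄−z₂))/((z₃−z₂)(z₄−z₁))` when all points are finite,
extended to one point at infinity by omitting the two factors containing it. -/
noncomputable def CR : OnePoint ℂ → OnePoint ℂ → OnePoint ℂ → OnePoint ℂ → ℂ
  | Option.none,    Option.some z₂, Option.some z₃, Option.some z₄ => (z₄ - z₂) / (z₃ - z₂)
  | Option.some z₁, Option.none,    Option.some z₃, Option.some z₄ => (z₃ - z₁) / (z₄ - z₁)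
  | Option.some z₁, Option.some z₂, Option.none,    Option.some z₄ => (z₄ - z₂) / (z₄ - z₁)
  | Option.some z₁, Option.some z₂, Option.some z₃, Option.none    => (z₃ - z₁) / (z₃ - z₂)
  | Option.some z₁, Option.some z₂, Option.some z₃, Option.some z₄ =>
      ((z₃ - z₁) * (z₄ - z₂)) / ((z₃ - z₂) * (z₄ - z₁))
  | _, _, _, _ => 0

/-!
Normalize `p 0 = ∞`, `p 1 = 0`, `p 2 = 1`. The first four cross-ratio equations are linear in the
remaining points: they give `p 3 = a 0` and, in terms of `u = p 5`, `p 6 = a 1 * u`,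
`p 7 = w := a 1 * a 2 * u + 1 - a 2` and `p 4 = w / a 3`. The last equation then becomes a quadratic
in `u`. For `a` off a hypersurface this quadratic has nonzero leading coefficient and discriminant,
hence exactly two roots, and no root makes two of the eight points collide: each collision is the
vanishing of a linear form in `u`, which at a root of the quadratic forces their resultant, a
polynomial in `a`, to vanish.
-/

namespace CrossRatioDegreeExample

lemma CR_infty_coe (z₂ z₃ z₄ : ℂ) : CR ∞ z₂ z₃ z₄ = (z₄ - z₂) / (z₃ - z₂) := rfl

lemma CR_coe (z₁ z₂ z₃ z₄ : ℂ) :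
    CR z₁ z₂ z₃ z₄ = ((z₃ - z₁) * (z₄ - z₂)) / ((z₃ - z₂) * (z₄ - z₁)) := rfl

section Quadratic

variable {R : Type*} [CommRing R]

/-- The resultant of `c₂ X² + c₁ X + c₀` and `α X + β`. -/
def linearResultant (c₂ c₁ c₀ α β : R) : R := c₂ * β ^ 2 - c₁ * α * β + c₀ * α ^ 2

lemma linear_ne_zero_of_linearResultant_ne_zero {c₂ c₁ c₀ α β u : R}
    (hu : c₂ * (u * u) + c₁ * u + c₀ = 0) (h : linearResultant c₂ c₁ c₀ α β ≠ 0) :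
    α * u + β ≠ 0 := by
  intro hlin
  apply h
  unfold linearResultant
  linear_combination α ^ 2 * hu + (c₂ * (β - α * u) - c₁ * α) * hlin

end Quadratic

lemma exists_roots_eq_pair_of_discrim_ne_zero {K : Type*} [Field K] [IsAlgClosed K]
    [NeZero (2 : K)] {a b c : K} (ha : a ≠ 0) (hd : discrim a b c ≠ 0) :
    ∃ x y, x ≠ y ∧ {z | a * (z * z) + b * z + c = 0} = {x, y} := by
  obtain ⟨s, hs⟩ := IsAlgClosed.exists_eq_mul_self (discrim a b c)
  refine ⟨_, _, fun h => hd ?_, Set.ext (quadratic_eq_zero_iff ha hs)⟩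
  have h2a : 2 * a ≠ 0 := mul_ne_zero two_ne_zero ha
  rw [div_left_inj' h2a] at h
  have h2s : (2 : K) * s = 0 := by linear_combination h
  rw [hs, (mul_eq_zero.mp h2s).resolve_left two_ne_zero, mul_zero]

noncomputable def config (a : Fin 5 → ℂ) (u : ℂ) : Fin 8 → OnePoint ℂ :=
  ![∞, (0 : ℂ), (1 : ℂ), a 0, ((a 1 * a 2 * u + (1 - a 2)) / a 3 : ℂ), u, a 1 * u,
    a 1 * a 2 * u + (1 - a 2)]

def solutionSet (a : Fin 5 → ℂ) : Set (Fin 8 → OnePoint ℂ) :=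
  {p | Function.Injective p ∧ p 0 = ∞ ∧ p 1 = ((0 : ℂ) : OnePoint ℂ) ∧
    p 2 = ((1 : ℂ) : OnePoint ℂ) ∧
    CR (p 0) (p 1) (p 2) (p 3) = a 0 ∧
    CR (p 0) (p 1) (p 5) (p 6) = a 1 ∧
    CR (p 0) (p 2) (p 6) (p 7) = a 2 ∧
    CR (p 0) (p 1) (p 4) (p 7) = a 3 ∧
    CR (p 2) (p 3) (p 4) (p 5) = a 4}

section Coefficients

variable {R : Type*} [CommRing R] (a : Fin 5 → R)

/- The coefficients of `(w - a 3) (u - a 0) - a 4 (w - a 0 * a 3) (u - 1)`, where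
`w = a 1 * a 2 * u + (1 - a 2)`: the last cross-ratio equation for `config a u`
with its denominators cleared. -/
def quadA : R := a 1 * a 2 * (1 - a 4)
def quadB : R := (1 - a 2 - a 3 - a 0 * a 1 * a 2) - a 4 * (1 - a 2 - a 0 * a 3 - a 1 * a 2)
def quadC : R := -a 0 * (1 - a 2 - a 3) + a 4 * (1 - a 2 - a 0 * a 3)

/-- Given `a i ∉ {0, 1}`, two points of `config a u` coincide only if one of these forms
`α u + β` vanishes. -/
def degeneracyForms : List (R × R) :=
  [(1, 0), (1, -1), (1, -a 0), (a 1, -1), (a 1, -a 0), (a 1 * a 2, 1 - a 2),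
    (a 1 * a 2, 1 - a 2 - a 3), (a 1 * a 2, 1 - a 2 - a 0 * a 3), (a 1 * a 2, 1 - a 2 - a 0),
    (a 1 * a 2 - a 3, 1 - a 2), (a 1 * a 2 - a 3 * a 1, 1 - a 2), (a 1 * a 2 - 1, 1 - a 2)]

def genericity : R :=
  quadA a * discrim (quadA a) (quadB a) (quadC a) *
    ((degeneracyForms a).map fun f => linearResultant (quadA a) (quadB a) (quadC a) f.1 f.2).prod

end Coefficients

lemma eval_genericity (a : Fin 5 → ℂ) :
    MvPolynomial.eval a (genericity MvPolynomial.X) = genericity a := by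
  simp [genericity, degeneracyForms, linearResultant, discrim, quadA, quadB, quadC]

lemma genericity_ne_zero : genericity (MvPolynomial.X : Fin 5 → MvPolynomial (Fin 5) ℂ) ≠ 0 := by
  intro h
  have := eval_genericity ![2, 3, 5, 7, 11]
  rw [h, map_zero] at this
  simp only [genericity, degeneracyForms, linearResultant, discrim, quadA, quadB, quadC,
    Matrix.cons_val, List.map_cons, List.map_nil, List.prod_cons, List.prod_nil] at this
  norm_num at this

section Genericity

variable {R : Type*} [CommRing R] {a : Fin 5 → R}

lemma quadA_ne_zero_of_genericity_ne_zero (h : genericity a ≠ 0) : quadA a ≠ 0 :=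
  left_ne_zero_of_mul (left_ne_zero_of_mul h)

lemma discrim_ne_zero_of_genericity_ne_zero (h : genericity a ≠ 0) :
    discrim (quadA a) (quadB a) (quadC a) ≠ 0 :=
  right_ne_zero_of_mul (left_ne_zero_of_mul h)

lemma degeneracyForms_ne_zero_of_genericity_ne_zero [IsDomain R] (h : genericity a ≠ 0) {u : R}
    (hu : quadA a * (u * u) + quadB a * u + quadC a = 0) :
    ∀ f ∈ degeneracyForms a, f.1 * u + f.2 ≠ 0 := by
  intro f hf
  refine linear_ne_zero_of_linearResultant_ne_zero hu fun h0 => right_ne_zero_of_mul h ?_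
  exact List.prod_eq_zero_iff.mpr (List.mem_map.mpr ⟨f, hf, h0⟩)

end Genericity

variable {a : Fin 5 → ℂ}

lemma config_injective (ha : ∀ i, a i ≠ 0 ∧ a i ≠ 1) {u : ℂ}
    (hu : ∀ f ∈ degeneracyForms a, f.1 * u + f.2 ≠ 0) : Function.Injective (config a u) := by
  simp only [degeneracyForms, List.mem_cons, List.not_mem_nil, forall_eq_or_imp] at hu
  have := ha 0; have := ha 1; have := ha 2; have := ha 3
  refine List.nodup_ofFn.mp ?_
  simp only [config, List.ofFn_succ, List.ofFn_zero, Matrix.cons_val_zero, Matrix.cons_val_succ,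
    Matrix.cons_val_fin_one, List.nodup_cons, List.nodup_nil, List.mem_cons, List.not_mem_nil,
    infty_ne_coe, some_eq_iff, div_eq_iff (ha 3).1, eq_div_iff (ha 3).1, zero_eq_mul, not_or,
    or_false, and_true]
  split_ands <;> grind

lemma config_mem_solutionSet (ha : ∀ i, a i ≠ 0 ∧ a i ≠ 1) {u : ℂ}
    (hroot : quadA a * (u * u) + quadB a * u + quadC a = 0)
    (hu : ∀ f ∈ degeneracyForms a, f.1 * u + f.2 ≠ 0) : config a u ∈ solutionSet a := by
  have hforms := hu
  simp only [degeneracyForms, List.forall_mem_cons, one_mul, add_zero, ← sub_eq_add_neg] at hforms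
  obtain ⟨hu0, hu1, -, hv1, -, hw0, -, hwa, -⟩ := hforms
  have ha3 := (ha 3).1
  refine ⟨config_injective ha hu, rfl, rfl, rfl, ?_, ?_, ?_, ?_, ?_⟩ <;>
    simp only [config, Matrix.cons_val, CR_infty_coe, CR_coe, sub_zero]
  · simp
  · exact mul_div_cancel_right₀ _ hu0
  · rw [div_eq_iff hv1]; ring
  · exact div_div_cancel₀ hw0
  · have hya : (a 1 * a 2 * u + (1 - a 2)) / a 3 - a 0 ≠ 0 := by
      rw [div_sub' ha3]
      exact div_ne_zero (by contrapose! hwa; linear_combination hwa) ha3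
    rw [div_eq_iff (mul_ne_zero hya hu1)]
    field_simp
    unfold quadA quadB quadC at hroot
    linear_combination hroot

lemma exists_eq_normalized_of_injective {p : Fin 8 → OnePoint ℂ} (hinj : Function.Injective p)
    (hp0 : p 0 = ∞) (hp1 : p 1 = ((0 : ℂ) : OnePoint ℂ)) (hp2 : p 2 = ((1 : ℂ) : OnePoint ℂ)) :
    ∃ z₃ z₄ z₅ z₆ z₇ : ℂ, p = ![∞, (0 : ℂ), (1 : ℂ), z₃, z₄, z₅, z₆, z₇] := by
  have hfin : ∀ i ≠ 0, ∃ z : ℂ, (z : OnePoint ℂ) = p i := fun i hi =>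
    OnePoint.ne_infty_iff_exists.mp (hp0 ▸ hinj.ne hi)
  obtain ⟨z₃, hz₃⟩ := hfin 3 (by decide)
  obtain ⟨z₄, hz₄⟩ := hfin 4 (by decide)
  obtain ⟨z₅, hz₅⟩ := hfin 5 (by decide)
  obtain ⟨z₆, hz₆⟩ := hfin 6 (by decide)
  obtain ⟨z₇, hz₇⟩ := hfin 7 (by decide)
  refine ⟨z₃, z₄, z₅, z₆, z₇, funext fun i => ?_⟩
  fin_cases i <;> simp [hp0, hp1, hp2, hz₃, hz₄, hz₅, hz₆, hz₇]

lemma exists_eq_config_of_mem_solutionSet (ha3 : a 3 ≠ 0) {p : Fin 8 → OnePoint ℂ}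
    (hp : p ∈ solutionSet a) :
    ∃ u, quadA a * (u * u) + quadB a * u + quadC a = 0 ∧ p = config a u := by
  obtain ⟨hinj, hp0, hp1, hp2, e1, e2, e3, e4, e5⟩ := hp
  obtain ⟨z₃, z₄, z₅, z₆, z₇, rfl⟩ := exists_eq_normalized_of_injective hinj hp0 hp1 hp2
  have hdistinct : ∀ {i j : Fin 8} {x y : ℂ}, i ≠ j →
      ![∞, (0 : ℂ), (1 : ℂ), z₃, z₄, z₅, z₆, z₇] i = (x : OnePoint ℂ) →
      ![∞, (0 : ℂ), (1 : ℂ), z₃, z₄, z₅, z₆, z₇] j = (y : OnePoint ℂ) → x ≠ y := by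
    intro i j x y hij hx hy h
    exact hinj.ne hij (by rw [hx, hy, h])
  have h₅₀ : z₅ ≠ 0 := hdistinct (by decide : (5 : Fin 8) ≠ 1) rfl rfl
  have h₅₁ : z₅ - 1 ≠ 0 := sub_ne_zero.mpr (hdistinct (by decide : (5 : Fin 8) ≠ 2) rfl rfl)
  have h₆₁ : z₆ - 1 ≠ 0 := sub_ne_zero.mpr (hdistinct (by decide : (6 : Fin 8) ≠ 2) rfl rfl)
  have h₄₀ : z₄ ≠ 0 := hdistinct (by decide : (4 : Fin 8) ≠ 1) rfl rfl
  have h₄₃ : z₄ - z₃ ≠ 0 := sub_ne_zero.mpr (hdistinct (by decide : (4 : Fin 8) ≠ 3) rfl rfl)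
  simp only [Matrix.cons_val, CR_infty_coe, CR_coe, sub_zero, div_one] at e1 e2 e3 e4 e5
  rw [div_eq_iff h₅₀] at e2
  rw [div_eq_iff h₆₁] at e3
  rw [div_eq_iff h₄₀] at e4
  rw [div_eq_iff (mul_ne_zero h₄₃ h₅₁)] at e5
  subst e1 e2
  have hz₇ : z₇ = a 1 * a 2 * z₅ + (1 - a 2) := by linear_combination e3
  have hz₄ : z₄ = (a 1 * a 2 * z₅ + (1 - a 2)) / a 3 := by
    rw [eq_div_iff ha3]
    linear_combination hz₇ - e4
  refine ⟨z₅, ?_, by rw [config, hz₇, hz₄]⟩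
  unfold quadA quadB quadC
  linear_combination a 3 * e5 + ((z₅ - a 0) - a 4 * (z₅ - 1)) * (e4 - hz₇)

lemma solutionSet_eq_image (ha : ∀ i, a i ≠ 0 ∧ a i ≠ 1) (hgen : genericity a ≠ 0) :
    solutionSet a = config a '' {u | quadA a * (u * u) + quadB a * u + quadC a = 0} := by
  ext p
  constructor
  · intro hp
    obtain ⟨u, hu, rfl⟩ := exists_eq_config_of_mem_solutionSet (ha 3).1 hp
    exact ⟨u, hu, rfl⟩
  · rintro ⟨u, hu, rfl⟩
    exact config_mem_solutionSet ha hu (degeneracyForms_ne_zero_of_genericity_ne_zero hgen hu)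

end CrossRatioDegreeExample

open CrossRatioDegreeExample

theorem crossRatioDegree_eq_two_example :
    ∃ q : MvPolynomial (Fin 5) ℂ, q ≠ 0 ∧
      ∀ a : Fin 5 → ℂ, (∀ i, a i ≠ 0 ∧ a i ≠ 1) → MvPolynomial.eval a q ≠ 0 →
        let S : Set (Fin 8 → OnePoint ℂ) :=
          {p | Function.Injective p ∧ p 0 = ∞ ∧ p 1 = ((0 : ℂ) : OnePoint ℂ) ∧
            p 2 = ((1 : ℂ) : OnePoint ℂ) ∧
            CR (p 0) (p 1) (p 2) (p 3) = a 0 ∧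
            CR (p 0) (p 1) (p 5) (p 6) = a 1 ∧
            CR (p 0) (p 2) (p 6) (p 7) = a 2 ∧
            CR (p 0) (p 1) (p 4) (p 7) = a 3 ∧
            CR (p 2) (p 3) (p 4) (p 5) = a 4}
        S.Finite ∧ S.ncard = 2 := by
  refine ⟨genericity MvPolynomial.X, genericity_ne_zero, fun a ha hq => ?_⟩
  rw [eval_genericity] at hq
  obtain ⟨u₁, u₂, hne, hroots⟩ := exists_roots_eq_pair_of_discrim_ne_zero
    (quadA_ne_zero_of_genericity_ne_zero hq) (discrim_ne_zero_of_genericity_ne_zero hq)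
  have hconfig : Function.Injective (config a) := fun u v h =>
    OnePoint.coe_injective (congrFun h 5)
  show (solutionSet a).Finite ∧ (solutionSet a).ncard = 2
  rw [solutionSet_eq_image ha hq, hroots, Set.image_pair]
  exact ⟨Set.toFinite _, Set.ncard_pair (hconfig.ne hne)⟩
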